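/- arXiv:1306.2439 — 2 statements merged into one kernel-verified Lean document; each statement's English description precedes it below -/
import Mathlib

section
/- For every s ≥ 1 and all 1 ≤ i, j ≤ s, ∫₀¹ P̂_{i−1}(x) (∫₀ˣ P̂_{j−1}(t) dt) dx = (X_s)_{ij}; that is, the value is 1/2 if i = j = 1, ξ_j if i = j+1, −ξ_i if j = i+1, and 0 otherwise. -/
noncomputable section

/-- `ξ_j = 1/(2√(4j²−1))`. -/
def xi (j : ℕ) : ℝ := 1 / (2 * Real.sqrt (4 * (j : ℝ) ^ 2 - 1))

/-- `P : ℕ → ℝ[X]` is the family of shifted Legendre polynomials, orthonormal on `[0,1]`,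
with `deg P j = j` and positive leading coefficient. -/
def IsShiftedLegendre (P : ℕ → Polynomial ℝ) : Prop :=
  (∀ j, (P j).degree = (j : ℕ)) ∧
  (∀ j, 0 < (P j).leadingCoeff) ∧
  (∀ i j, (∫ x in (0:ℝ)..1, (P i).eval x * (P j).eval x) = if i = j then 1 else 0)

/-- The tridiagonal matrix `X_s` (0-based indexing of the 1-based matrix in the paper):
`(X_s)_{11} = 1/2`, `(X_s)_{j+1,j} = ξ_j`, `(X_s)_{j,j+1} = −ξ_j`. -/
def Xmat (s : ℕ) : Matrix (Fin s) (Fin s) ℝ :=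
  Matrix.of fun i j =>
    if (i : ℕ) = 0 ∧ (j : ℕ) = 0 then 1 / 2
    else if (i : ℕ) = (j : ℕ) + 1 then xi ((j : ℕ) + 1)
    else if (j : ℕ) = (i : ℕ) + 1 then -xi ((i : ℕ) + 1)
    else 0

open Polynomial Finset intervalIntegral

/-! ### Basic integration tools for polynomials -/

lemma pftc (p F : Polynomial ℝ) (h : F.derivative = p) (a b : ℝ) :
    ∫ x in a..b, p.eval x = F.eval b - F.eval a := by
  apply intervalIntegral.integral_deriv_eq_sub' (fun x => F.eval x)
  · funext x; rw [Polynomial.deriv, h]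
  · intro x _; exact F.differentiableAt
  · exact p.continuous_aeval.continuousOn

lemma pII (p q : Polynomial ℝ) (a b : ℝ) :
    IntervalIntegrable (fun x => p.eval x * q.eval x) MeasureTheory.volume a b :=
  (p.continuous.mul q.continuous).intervalIntegrable _ _

lemma ibp (f g : Polynomial ℝ) :
    ∫ x in (0:ℝ)..1, f.derivative.eval x * g.eval x =
      f.eval 1 * g.eval 1 - f.eval 0 * g.eval 0
        - ∫ x in (0:ℝ)..1, f.eval x * g.derivative.eval x := by
  have h := pftc (f.derivative * g + f * g.derivative) (f * g) (by simp [mul_comm]) 0 1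
  simp only [eval_add, eval_mul] at h
  rw [intervalIntegral.integral_add (pII _ _ _ _) (pII _ _ _ _)] at h
  linarith

lemma ibp_iter (n : ℕ) (f : Polynomial ℝ)
    (h0 : ∀ m < n, (derivative^[m] f).eval 0 = 0)
    (h1 : ∀ m < n, (derivative^[m] f).eval 1 = 0) :
    ∀ g : Polynomial ℝ, ∫ x in (0:ℝ)..1, (derivative^[n] f).eval x * g.eval x =
      (-1)^n * ∫ x in (0:ℝ)..1, f.eval x * (derivative^[n] g).eval x := by
  induction n with
  | zero => simp
  | succ n ih =>
    intro g
    rw [Function.iterate_succ_apply', ibp (derivative^[n] f) g,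
      h0 n (by omega), h1 n (by omega),
      ih (fun m hm => h0 m (by omega)) (fun m hm => h1 m (by omega)) g.derivative,
      ← Function.iterate_succ_apply]
    ring

lemma eval_eq_zero_of_dvd {f : Polynomial ℝ} {a : ℝ} (h : (X - C a) ∣ f) : f.eval a = 0 := by
  obtain ⟨q, rfl⟩ := h; simp

lemma pow_sub_dvd_iterate_derivative {a : ℝ} (k : ℕ) (f : Polynomial ℝ)
    (hf : (X - C a) ^ k ∣ f) (m : ℕ) (hm : m ≤ k) :
    (X - C a) ^ (k - m) ∣ derivative^[m] f := by
  induction m with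
  | zero => simpa using hf
  | succ m ih =>
    obtain ⟨q, hq⟩ := ih (by omega)
    rw [Function.iterate_succ_apply', hq, derivative_mul, derivative_pow]
    have h1 : (X - C a) ^ (k - (m+1)) ∣ (X - C a) ^ (k - m - 1) := pow_dvd_pow _ (by omega)
    have h2 : (X - C a) ^ (k - (m+1)) ∣ (X - C a) ^ (k - m) := pow_dvd_pow _ (by omega)
    exact dvd_add (((h1.mul_left _).mul_right _).mul_right _) (h2.mul_right _)

lemma iterate_derivative_eval_zero_of_dvd {a : ℝ} {k : ℕ} {f : Polynomial ℝ}
    (hf : (X - C a) ^ k ∣ f) {m : ℕ} (hm : m < k) :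
    (derivative^[m] f).eval a = 0 :=
  eval_eq_zero_of_dvd ((dvd_pow_self _ (by omega : k - m ≠ 0)).trans
    (pow_sub_dvd_iterate_derivative k f hf m (by omega)))

/-! ### The Beta integral -/

lemma beta_nat (n : ℕ) : ∀ m : ℕ, ∫ x in (0:ℝ)..1, x ^ m * (1 - x) ^ n
    = (Nat.factorial m * Nat.factorial n : ℝ) / Nat.factorial (m + n + 1) := by
  induction n with
  | zero =>
    intro m
    simp only [pow_zero, mul_one, integral_pow, Nat.factorial]
    push_cast [Nat.factorial_succ]
    field_simp
    simp
  | succ n ih =>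
    intro m
    have key : ∀ x : ℝ, HasDerivAt (fun x : ℝ => x ^ (m+1) * (1 - x) ^ (n+1))
        (((m:ℝ)+1) * (x ^ m * (1-x)^(n+1)) - ((n:ℝ)+1) * (x ^ (m+1) * (1-x)^n)) x := by
      intro x
      have h1 : HasDerivAt (fun x : ℝ => x ^ (m+1)) (((m:ℝ)+1) * x ^ m) x := by
        simpa using hasDerivAt_pow (m+1) x
      have h2 : HasDerivAt (fun x : ℝ => (1 - x) ^ (n+1)) (-(((n:ℝ)+1) * (1-x)^n)) x := by
        have := ((hasDerivAt_id x).const_sub 1).fun_pow (n+1)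
        simpa using this
      have := h1.fun_mul h2
      exact this.congr_deriv (by ring)
    have hint : ∫ x in (0:ℝ)..1, (((m:ℝ)+1) * (x ^ m * (1-x)^(n+1)) - ((n:ℝ)+1) * (x ^ (m+1) * (1-x)^n))
        = 0 := by
      rw [integral_eq_sub_of_hasDerivAt (fun x _ => key x)]
      · norm_num
      · apply Continuous.intervalIntegrable; continuity
    rw [intervalIntegral.integral_sub] at hint
    · rw [intervalIntegral.integral_const_mul, intervalIntegral.integral_const_mul] at hint
      have h3 : (∫ x in (0:ℝ)..1, x ^ m * (1-x)^(n+1))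
          = ((n:ℝ)+1) / ((m:ℝ)+1) * ∫ x in (0:ℝ)..1, x ^ (m+1) * (1-x)^n := by
        have hm : ((m:ℝ)+1) ≠ 0 := by positivity
        have : (∫ x in (0:ℝ)..1, ((m:ℝ)+1) * (x ^ m * (1-x)^(n+1)))
            = ((m:ℝ)+1) * ∫ x in (0:ℝ)..1, x ^ m * (1-x)^(n+1) := integral_const_mul _ _
        field_simp
        nlinarith [hint, this]
      rw [h3, ih (m+1)]
      rw [div_mul_div_comm]
      rw [div_eq_div_iff (by positivity) (by positivity)]
      push_cast [Nat.factorial_succ, show m + 1 + n + 1 = m + n + 1 + 1 by omega,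
        show m + (n+1) + 1 = m + n + 1 + 1 by omega]
      ring
    · apply Continuous.intervalIntegrable; continuity
    · apply Continuous.intervalIntegrable; continuity

/-! ### The concrete shifted Legendre polynomials via Rodrigues' formula -/

def Bp (n : ℕ) : Polynomial ℝ := (X - C 0) ^ n * (X - C 1) ^ n

lemma Bp_monic (n : ℕ) : (Bp n).Monic :=
  ((monic_X_sub_C 0).pow n).mul ((monic_X_sub_C 1).pow n)

lemma Bp_natDegree (n : ℕ) : (Bp n).natDegree = 2 * n := by
  rw [Bp, natDegree_mul (((monic_X_sub_C (0:ℝ)).pow n).ne_zero)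
    (((monic_X_sub_C (1:ℝ)).pow n).ne_zero)]
  rw [natDegree_pow, natDegree_pow, natDegree_X_sub_C, natDegree_X_sub_C]; ring

def Tp (n : ℕ) : Polynomial ℝ := derivative^[n] (Bp n)

lemma Tp_coeff_n (n : ℕ) : (Tp n).coeff n = (n.factorial * n.centralBinom : ℕ) := by
  rw [Tp, coeff_iterate_derivative]
  have h : (Bp n).coeff (n + n) = 1 := by
    have := (Bp_monic n).leadingCoeff
    rwa [leadingCoeff, Bp_natDegree, two_mul] at this
  rw [h, Nat.descFactorial_eq_factorial_mul_choose]
  simp [Nat.centralBinom, two_mul]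

lemma Tp_natDegree_le (n : ℕ) : (Tp n).natDegree ≤ n := by
  have := natDegree_iterate_derivative (Bp n) n
  rwa [Bp_natDegree, show 2*n - n = n by omega] at this

lemma Tp_coeff_ne (n : ℕ) : (Tp n).coeff n ≠ 0 := by
  rw [Tp_coeff_n]
  exact_mod_cast Nat.cast_ne_zero.mpr (Nat.mul_pos n.factorial_pos n.centralBinom_pos).ne'

lemma Tp_natDegree (n : ℕ) : (Tp n).natDegree = n :=
  le_antisymm (Tp_natDegree_le n) (le_natDegree_of_ne_zero (Tp_coeff_ne n))

lemma Tp_degree (n : ℕ) : (Tp n).degree = n := by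
  rw [degree_eq_natDegree (fun h => Tp_coeff_ne n (by simp [h])), Tp_natDegree]

lemma Tp_leadingCoeff (n : ℕ) : (Tp n).leadingCoeff = (n.factorial * n.centralBinom : ℕ) := by
  rw [leadingCoeff, Tp_natDegree, Tp_coeff_n]

lemma iterate_derivative_Tp (n : ℕ) :
    derivative^[n] (Tp n) = C (((2 * n).factorial : ℕ) : ℝ) := by
  rw [Tp, ← Function.iterate_add_apply]
  have hdeg : (derivative^[n + n] (Bp n)).natDegree ≤ 0 := by
    have := natDegree_iterate_derivative (Bp n) (n + n)
    rwa [Bp_natDegree, show 2*n - (n+n) = 0 by omega] at this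
  rw [eq_C_of_natDegree_le_zero hdeg]
  congr 1
  rw [coeff_iterate_derivative]
  have h : (Bp n).coeff (0 + (n + n)) = 1 := by
    have := (Bp_monic n).leadingCoeff
    rwa [leadingCoeff, Bp_natDegree, show 2*n = 0 + (n+n) by omega] at this
  rw [h, Nat.zero_add, Nat.descFactorial_self]
  simp [two_mul]

lemma Bp_deriv_eval0 (n : ℕ) : ∀ m < n, (derivative^[m] (Bp n)).eval 0 = 0 :=
  fun _ hm => iterate_derivative_eval_zero_of_dvd (dvd_mul_right _ _) hm
lemma Bp_deriv_eval1 (n : ℕ) : ∀ m < n, (derivative^[m] (Bp n)).eval 1 = 0 :=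
  fun _ hm => iterate_derivative_eval_zero_of_dvd (dvd_mul_left _ _) hm

lemma Tp_orth_lt {m n : ℕ} (h : m < n) :
    ∫ x in (0:ℝ)..1, (Tp n).eval x * (Tp m).eval x = 0 := by
  rw [Tp, ibp_iter n (Bp n) (Bp_deriv_eval0 n) (Bp_deriv_eval1 n) (Tp m),
    iterate_derivative_eq_zero (by rw [Tp_natDegree]; exact h)]
  simp

lemma integral_Bp (n : ℕ) : ∫ x in (0:ℝ)..1, (Bp n).eval x
    = (-1)^n * ((Nat.factorial n * Nat.factorial n : ℕ) : ℝ) / Nat.factorial (2*n + 1) := by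
  have hc : ∀ x : ℝ, (Bp n).eval x = (-1)^n * (x ^ n * (1 - x)^n) := by
    intro x
    simp only [Bp, eval_mul, eval_pow, eval_sub, eval_X, eval_C]
    rw [show x - 1 = -(1-x) by ring, sub_zero, neg_pow]
    ring
  rw [intervalIntegral.integral_congr (fun x _ => hc x), intervalIntegral.integral_const_mul,
    beta_nat n n]
  push_cast
  rw [show n + n + 1 = 2*n+1 by ring]
  ring

lemma Tp_norm (n : ℕ) : ∫ x in (0:ℝ)..1, (Tp n).eval x * (Tp n).eval x
    = ((Nat.factorial n : ℝ))^2 / (2*n + 1) := by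
  rw [Tp, ibp_iter n (Bp n) (Bp_deriv_eval0 n) (Bp_deriv_eval1 n), ← Tp,
    iterate_derivative_Tp n]
  simp only [eval_C]
  rw [intervalIntegral.integral_mul_const, integral_Bp]
  have h1 : (Nat.factorial (2*n+1) : ℝ) = (2*n+1) * Nat.factorial (2*n) := by
    exact_mod_cast Nat.factorial_succ (2*n)
  have h2 : (Nat.factorial (2*n) : ℝ) ≠ 0 := Nat.cast_ne_zero.mpr (Nat.factorial_ne_zero _)
  have h3 : ((2*n+1 : ℕ) : ℝ) ≠ 0 := Nat.cast_ne_zero.mpr (by omega)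
  field_simp [h1]
  push_cast
  rw [show ((-1:ℝ)^n)^2 = 1 from by rw [← pow_mul, pow_mul']; norm_num, h1]
  ring

def Lp (n : ℕ) : Polynomial ℝ :=
  C (Real.sqrt (2*n+1) / n.factorial) * Tp n

lemma sqrt_pos' (n : ℕ) : 0 < Real.sqrt (2*n+1) :=
  Real.sqrt_pos.mpr (by positivity)

lemma Lp_const_ne (n : ℕ) : Real.sqrt (2*n+1) / n.factorial ≠ 0 := by
  have := sqrt_pos' n
  have : (0:ℝ) < n.factorial := by exact_mod_cast n.factorial_pos
  positivity

lemma Lp_degree (n : ℕ) : (Lp n).degree = n := by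
  rw [Lp, degree_C_mul (Lp_const_ne n), Tp_degree]

lemma Lp_leadingCoeff (n : ℕ) :
    (Lp n).leadingCoeff = Real.sqrt (2*n+1) * n.centralBinom := by
  rw [Lp, leadingCoeff_mul, leadingCoeff_C, Tp_leadingCoeff]
  push_cast
  have h : (n.factorial : ℝ) ≠ 0 := Nat.cast_ne_zero.mpr (Nat.factorial_ne_zero _)
  field_simp

lemma Lp_leadingCoeff_pos (n : ℕ) : 0 < (Lp n).leadingCoeff := by
  rw [Lp_leadingCoeff]
  have := sqrt_pos' n
  have h2 : (0:ℝ) < n.centralBinom := by exact_mod_cast n.centralBinom_pos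
  positivity

lemma Lp_orth (i j : ℕ) :
    (∫ x in (0:ℝ)..1, (Lp i).eval x * (Lp j).eval x) = if i = j then 1 else 0 := by
  have hc : ∀ x : ℝ, (Lp i).eval x * (Lp j).eval x
      = (Real.sqrt (2*i+1) / i.factorial) * (Real.sqrt (2*j+1) / j.factorial)
        * ((Tp i).eval x * (Tp j).eval x) := by
    intro x; simp only [Lp, eval_mul, eval_C]; ring
  rw [intervalIntegral.integral_congr (fun x _ => hc x), intervalIntegral.integral_const_mul]
  rcases lt_trichotomy i j with h | h | h
  · rw [if_neg h.ne, intervalIntegral.integral_congr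
      (fun x _ => mul_comm ((Tp i).eval x) ((Tp j).eval x)), Tp_orth_lt h, mul_zero]
  · subst h
    rw [if_pos rfl, Tp_norm]
    have h1 : (i.factorial : ℝ) ≠ 0 := Nat.cast_ne_zero.mpr (Nat.factorial_ne_zero _)
    have h2 : Real.sqrt (2*i+1) * Real.sqrt (2*i+1) = 2*i+1 :=
      Real.mul_self_sqrt (by positivity)
    field_simp
    ring
    exact Real.sq_sqrt (by positivity)
  · rw [if_neg h.ne', Tp_orth_lt h, mul_zero]

lemma Lp_isShiftedLegendre : IsShiftedLegendre Lp :=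
  ⟨Lp_degree, Lp_leadingCoeff_pos, Lp_orth⟩

/-! ### Representation and uniqueness -/

variable {P : ℕ → Polynomial ℝ}

lemma Pne (hdeg : ∀ j, (P j).degree = (j : ℕ)) (n : ℕ) : P n ≠ 0 := by
  intro h
  have := hdeg n
  rw [h, degree_zero] at this
  exact absurd this (by simp)

lemma Pcoeff_ne (hdeg : ∀ j, (P j).degree = (j : ℕ)) (n : ℕ) : (P n).coeff n ≠ 0 := by
  have h1 : (P n).natDegree = n := natDegree_eq_of_degree_eq_some (hdeg n)
  have h2 := leadingCoeff_ne_zero.mpr (Pne hdeg n)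
  rwa [leadingCoeff, h1] at h2

lemma rep (hdeg : ∀ j, (P j).degree = (j : ℕ)) :
    ∀ n : ℕ, ∀ q : Polynomial ℝ, q.degree < (n : ℕ) →
      ∃ c : ℕ → ℝ, q = ∑ k ∈ Finset.range n, C (c k) * P k := by
  intro n
  induction n with
  | zero =>
    intro q hq
    refine ⟨fun _ => 0, ?_⟩
    simp only [Finset.range_zero, Finset.sum_empty]
    rw [Nat.cast_zero] at hq
    exact degree_eq_bot.mp (Nat.WithBot.lt_zero_iff.mp hq)
  | succ n ih =>
    intro q hq
    have hlead := Pcoeff_ne hdeg n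
    set a := q.coeff n / (P n).coeff n with ha
    have hq' : (q - C a * P n).degree < (n : ℕ) := by
      rw [degree_lt_iff_coeff_zero]
      intro m hm
      rcases eq_or_lt_of_le hm with h | h
      · rw [coeff_sub, coeff_C_mul, ← h, ha, div_mul_cancel₀ _ hlead, sub_self]
      · have hqm : q.coeff m = 0 := by
          apply coeff_eq_zero_of_degree_lt
          exact lt_of_lt_of_le hq (by exact_mod_cast h)
        have hPm : (P n).coeff m = 0 := by
          apply coeff_eq_zero_of_degree_lt
          rw [hdeg n]; exact_mod_cast h
        rw [coeff_sub, coeff_C_mul, hqm, hPm, mul_zero, sub_self]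
    obtain ⟨c, hc⟩ := ih (q - C a * P n) hq'
    refine ⟨fun k => if k = n then a else c k, ?_⟩
    rw [Finset.sum_range_succ]
    have : ∑ k ∈ Finset.range n, C (if k = n then a else c k) * P k
        = ∑ k ∈ Finset.range n, C (c k) * P k := by
      refine Finset.sum_congr rfl fun k hk => ?_
      rw [if_neg (by simp at hk; omega)]
    rw [this, ← hc]
    simp

lemma extract (hP : IsShiftedLegendre P) (n : ℕ) (c : ℕ → ℝ) (j : ℕ) :
    (∫ x in (0:ℝ)..1, (∑ k ∈ Finset.range n, C (c k) * P k).eval x * (P j).eval x)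
      = if j < n then c j else 0 := by
  have hswap : ∀ x : ℝ, (∑ k ∈ Finset.range n, C (c k) * P k).eval x * (P j).eval x
      = ∑ k ∈ Finset.range n, c k * ((P k).eval x * (P j).eval x) := by
    intro x
    rw [eval_finset_sum, Finset.sum_mul]
    refine Finset.sum_congr rfl fun k _ => ?_
    simp [mul_assoc]
  rw [intervalIntegral.integral_congr (fun x _ => hswap x),
    intervalIntegral.integral_finset_sum
      (fun k _ => ((pII (P k) (P j) 0 1).const_mul (c k)))]
  have : ∀ k ∈ Finset.range n, (∫ x in (0:ℝ)..1, c k * ((P k).eval x * (P j).eval x))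
      = if k = j then c k else 0 := by
    intro k _
    rw [intervalIntegral.integral_const_mul, hP.2.2 k j]
    split_ifs <;> simp
  rw [Finset.sum_congr rfl this, Finset.sum_ite_eq' (Finset.range n) j c]
  simp

lemma high_orth (hP : IsShiftedLegendre P) (i : ℕ) (q : Polynomial ℝ) (hq : q.degree < (i : ℕ)) :
    (∫ x in (0:ℝ)..1, (P i).eval x * q.eval x) = 0 := by
  obtain ⟨c, rfl⟩ := rep hP.1 i q hq
  rw [intervalIntegral.integral_congr (fun x _ => mul_comm ((P i).eval x) _),
    extract hP i c i]
  simp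

lemma uniq (hP : IsShiftedLegendre P) : ∀ n, P n = Lp n := by
  intro n
  induction n using Nat.strong_induction_on with
  | _ n ih =>
    set a := (P n).leadingCoeff / (Lp n).leadingCoeff with ha
    have hLne : (Lp n).leadingCoeff ≠ 0 := (Lp_leadingCoeff_pos n).ne'
    have hPdeg : (P n).natDegree = n := natDegree_eq_of_degree_eq_some (hP.1 n)
    have hLdeg : (Lp n).natDegree = n := natDegree_eq_of_degree_eq_some (Lp_degree n)
    have hr : (P n - C a * Lp n).degree < (n : ℕ) := by
      rw [degree_lt_iff_coeff_zero]
      intro m hm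
      rcases eq_or_lt_of_le hm with h | h
      · rw [coeff_sub, coeff_C_mul, ← h]
        have h1 : (P n).coeff n = (P n).leadingCoeff := by rw [leadingCoeff, hPdeg]
        have h2 : (Lp n).coeff n = (Lp n).leadingCoeff := by rw [leadingCoeff, hLdeg]
        rw [h1, h2, ha, div_mul_cancel₀ _ hLne, sub_self]
      · have hqm : (P n).coeff m = 0 := by
          apply coeff_eq_zero_of_degree_lt
          rw [hP.1 n]; exact_mod_cast h
        have hPm : (Lp n).coeff m = 0 := by
          apply coeff_eq_zero_of_degree_lt
          rw [Lp_degree n]; exact_mod_cast h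
        rw [coeff_sub, coeff_C_mul, hqm, hPm, mul_zero, sub_self]
    obtain ⟨c, hc⟩ := rep hP.1 n _ hr
    have hczero : ∀ j < n, c j = 0 := by
      intro j hj
      have h1 := extract hP n c j
      rw [if_pos hj] at h1
      rw [← hc] at h1
      have hsplit : ∀ x : ℝ, (P n - C a * Lp n).eval x * (P j).eval x
          = (P n).eval x * (P j).eval x - a * ((Lp n).eval x * (Lp j).eval x) := by
        intro x
        rw [ih j hj]
        simp only [eval_sub, eval_mul, eval_C]
        ring
      rw [intervalIntegral.integral_congr (fun x _ => hsplit x),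
        intervalIntegral.integral_sub (pII _ _ _ _)
          ((pII (Lp n) (Lp j) 0 1).const_mul a),
        intervalIntegral.integral_const_mul, hP.2.2 n j, Lp_orth n j,
        if_neg (show n ≠ j by omega)] at h1
      simpa using h1.symm
    have hrzero : P n - C a * Lp n = 0 := by
      rw [hc]
      apply Finset.sum_eq_zero
      intro k hk
      rw [hczero k (Finset.mem_range.mp hk)]
      simp
    have hPn : P n = C a * Lp n := by
      have := sub_eq_zero.mp hrzero
      linear_combination this
    have ha1 : a = 1 := by
      have h1 := hP.2.2 n n
      rw [if_pos rfl] at h1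
      have hsplit : ∀ x : ℝ, (P n).eval x * (P n).eval x
          = (a * a) * ((Lp n).eval x * (Lp n).eval x) := by
        intro x
        rw [hPn]; simp only [eval_mul, eval_C]; ring
      rw [intervalIntegral.integral_congr (fun x _ => hsplit x),
        intervalIntegral.integral_const_mul, Lp_orth n n, if_pos rfl, mul_one] at h1
      have hapos : 0 < a := div_pos (hP.2.1 n) (Lp_leadingCoeff_pos n)
      nlinarith
    rw [hPn, ha1]
    simp

/-! ### The polynomial antiderivative -/

def pint (p : Polynomial ℝ) : Polynomial ℝ :=
  ∑ n ∈ Finset.range (p.natDegree + 1), C (p.coeff n / (n + 1)) * X ^ (n + 1)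

lemma derivative_pint (p : Polynomial ℝ) : (pint p).derivative = p := by
  rw [pint, derivative_sum]
  conv_rhs => rw [p.as_sum_range' (p.natDegree + 1) (by omega)]
  refine Finset.sum_congr rfl fun n _ => ?_
  rw [derivative_C_mul, derivative_X_pow, ← C_mul_X_pow_eq_monomial]
  push_cast
  rw [← mul_assoc, ← C_mul, div_mul_cancel₀]
  positivity

lemma pint_eval_zero (p : Polynomial ℝ) : (pint p).eval 0 = 0 := by
  simp [pint, eval_finset_sum]

lemma natDegree_pint (p : Polynomial ℝ) : (pint p).natDegree ≤ p.natDegree + 1 := by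
  refine (Polynomial.natDegree_sum_le _ _).trans ?_
  simp only [Finset.fold_max_le]
  refine ⟨by omega, fun n hn => ?_⟩
  refine (natDegree_C_mul_le _ _).trans ?_
  simp only [Finset.mem_range] at hn
  simpa using Nat.succ_le_succ (by omega : n ≤ p.natDegree)

lemma pint_coeff_top (p : Polynomial ℝ) :
    (pint p).coeff (p.natDegree + 1) = p.leadingCoeff / (p.natDegree + 1) := by
  rw [pint, finset_sum_coeff]
  rw [Finset.sum_eq_single p.natDegree]
  · rw [coeff_C_mul, coeff_X_pow, if_pos rfl, mul_one, leadingCoeff]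
  · intro b _ hb
    rw [coeff_C_mul, coeff_X_pow, if_neg (by omega), mul_zero]
  · intro h
    exact absurd (Finset.self_mem_range_succ p.natDegree) h

lemma integral_eq_pint (p : Polynomial ℝ) (x : ℝ) :
    (∫ t in (0:ℝ)..x, p.eval t) = (pint p).eval x := by
  rw [pftc p (pint p) (derivative_pint p), pint_eval_zero, sub_zero]

/-! ### Key integral computations -/

lemma pint_eval_one (hP : IsShiftedLegendre P) (i : ℕ) :
    (pint (P i)).eval 1 = if i = 0 then 1 else 0 := by
  rw [← integral_eq_pint]
  have h0 : P 0 = Lp 0 := uniq hP 0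
  have hLp0 : ∀ x : ℝ, (Lp 0).eval x = 1 := by
    intro x
    simp [Lp, Tp, Bp, Real.sqrt_one]
  have : ∀ x : ℝ, (P i).eval x = (P i).eval x * (P 0).eval x := by
    intro x
    rw [h0, hLp0 x, mul_one]
  rw [intervalIntegral.integral_congr (fun x hx => this x), hP.2.2 i 0]

lemma parts_key (hP : IsShiftedLegendre P) (i j : ℕ) :
    (∫ x in (0:ℝ)..1, (P i).eval x * (pint (P j)).eval x)
      + (∫ x in (0:ℝ)..1, (P j).eval x * (pint (P i)).eval x)
      = (if i = 0 then (1:ℝ) else 0) * (if j = 0 then 1 else 0) := by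
  have h := ibp (pint (P i)) (pint (P j))
  rw [derivative_pint, derivative_pint, pint_eval_zero, pint_eval_zero,
    pint_eval_one hP i, pint_eval_one hP j] at h
  have h2 : (∫ x in (0:ℝ)..1, (pint (P i)).eval x * (P j).eval x)
      = ∫ x in (0:ℝ)..1, (P j).eval x * (pint (P i)).eval x :=
    intervalIntegral.integral_congr (fun x _ => mul_comm _ _)
  rw [h2] at h
  linarith [h, mul_zero (0:ℝ)]

lemma degree_pint_lt (hP : IsShiftedLegendre P) (j i : ℕ) (hij : j + 1 < i) :
    (pint (P j)).degree < (i : ℕ) := by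
  have h1 : (pint (P j)).natDegree ≤ j + 1 := by
    have := natDegree_pint (P j)
    rwa [natDegree_eq_of_degree_eq_some (hP.1 j)] at this
  calc (pint (P j)).degree ≤ (pint (P j)).natDegree := degree_le_natDegree
    _ < (i : ℕ) := by exact_mod_cast lt_of_le_of_lt h1 hij

lemma S_high (hP : IsShiftedLegendre P) (i j : ℕ) (hij : j + 1 < i) :
    (∫ x in (0:ℝ)..1, (P i).eval x * (pint (P j)).eval x) = 0 :=
  high_orth hP i _ (degree_pint_lt hP j i hij)

lemma S_sub (hP : IsShiftedLegendre P) (j : ℕ) :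
    (∫ x in (0:ℝ)..1, (P (j+1)).eval x * (pint (P j)).eval x)
      = (P j).leadingCoeff / (((j:ℝ)+1) * (P (j+1)).leadingCoeff) := by
  set r := (P j).leadingCoeff / (((j:ℝ)+1) * (P (j+1)).leadingCoeff) with hr
  have hKne : (P (j+1)).leadingCoeff ≠ 0 := (hP.2.1 (j+1)).ne'
  have hPdeg : (P j).natDegree = j := natDegree_eq_of_degree_eq_some (hP.1 j)
  have hdiff : (pint (P j) - C r * P (j+1)).degree < ((j+1 : ℕ) : ℕ) := by
    rw [degree_lt_iff_coeff_zero]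
    intro m hm
    rcases eq_or_lt_of_le hm with h | h
    · rw [coeff_sub, coeff_C_mul, ← h]
      have h1 : (pint (P j)).coeff (j+1) = (P j).leadingCoeff / ((j:ℝ)+1) := by
        have := pint_coeff_top (P j)
        rwa [hPdeg, Nat.cast_inj.mpr rfl] at this
      have h2 : (P (j+1)).coeff (j+1) = (P (j+1)).leadingCoeff := by
        rw [leadingCoeff, natDegree_eq_of_degree_eq_some (hP.1 (j+1))]
      rw [h1, h2, hr]
      field_simp
      ring
    · have hm1 : (pint (P j)).coeff m = 0 := by
        apply coeff_eq_zero_of_natDegree_lt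
        have := natDegree_pint (P j)
        rw [hPdeg] at this
        omega
      have hm2 : (P (j+1)).coeff m = 0 := by
        apply coeff_eq_zero_of_degree_lt
        rw [hP.1 (j+1)]; exact_mod_cast h
      rw [coeff_sub, coeff_C_mul, hm1, hm2, mul_zero, sub_self]
  have hzero : (∫ x in (0:ℝ)..1, (P (j+1)).eval x * (pint (P j) - C r * P (j+1)).eval x) = 0 :=
    high_orth hP (j+1) _ hdiff
  have hsplit : ∀ x : ℝ, (P (j+1)).eval x * (pint (P j)).eval x
      = (P (j+1)).eval x * (pint (P j) - C r * P (j+1)).eval x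
        + r * ((P (j+1)).eval x * (P (j+1)).eval x) := by
    intro x
    simp only [eval_sub, eval_mul, eval_C]
    ring
  rw [intervalIntegral.integral_congr (fun x _ => hsplit x),
    intervalIntegral.integral_add
      (pII (P (j+1)) (pint (P j) - C r * P (j+1)) 0 1)
      ((pII (P (j+1)) (P (j+1)) 0 1).const_mul r),
    hzero, intervalIntegral.integral_const_mul, hP.2.2 (j+1) (j+1), if_pos rfl]
  ring

lemma ratio_eq_xi (hP : IsShiftedLegendre P) (j : ℕ) :
    (P j).leadingCoeff / (((j:ℝ)+1) * (P (j+1)).leadingCoeff) = xi (j+1) := by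
  rw [uniq hP j, uniq hP (j+1), Lp_leadingCoeff, Lp_leadingCoeff]
  have ha : (0:ℝ) ≤ 2*j+1 := by positivity
  have hb : (0:ℝ) ≤ 2*j+3 := by positivity
  have hab : (4 * ((j:ℝ)+1) ^ 2 - 1) = (2*j+1) * (2*j+3) := by ring
  rw [xi]
  push_cast
  rw [hab, Real.sqrt_mul ha]
  have hsa : Real.sqrt (2*(j:ℝ)+1) * Real.sqrt (2*(j:ℝ)+1) = 2*j+1 := Real.mul_self_sqrt ha
  have hsb : Real.sqrt (2*(j:ℝ)+3) * Real.sqrt (2*(j:ℝ)+3) = 2*j+3 := Real.mul_self_sqrt hb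
  have hsa' : Real.sqrt (2*(j:ℝ)+1) ≠ 0 := (Real.sqrt_pos.mpr (by positivity)).ne'
  have hsb' : Real.sqrt (2*(j:ℝ)+3) ≠ 0 := (Real.sqrt_pos.mpr (by positivity)).ne'
  have h23 : (2*((j:ℝ)+1)+1) = 2*j+3 := by ring
  rw [h23]
  have key : ((j:ℝ)+1) * (j+1).centralBinom = 2 * (2*j+1) * j.centralBinom := by
    exact_mod_cast Nat.succ_mul_centralBinom_succ j
  have hcb : ((j.centralBinom : ℝ)) ≠ 0 := Nat.cast_ne_zero.mpr j.centralBinom_pos.ne'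
  have hcb1 : (((j+1).centralBinom : ℝ)) ≠ 0 := Nat.cast_ne_zero.mpr (j+1).centralBinom_pos.ne'
  rw [div_eq_div_iff (by positivity) (by positivity)]
  push_cast at key ⊢
  linear_combination (2*Real.sqrt (2*(j:ℝ)+3)*((j.centralBinom:ℝ)))*hsa - Real.sqrt (2*(j:ℝ)+3)*key

lemma S_diag (hP : IsShiftedLegendre P) (i : ℕ) (hi : i ≠ 0) :
    (∫ x in (0:ℝ)..1, (P i).eval x * (pint (P i)).eval x) = 0 := by
  have h := parts_key hP i i
  rw [if_neg hi] at h
  simp only [zero_mul] at h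
  linarith

/-- For every `s ≥ 1` and all `1 ≤ i, j ≤ s` (0-based here),
`∫₀¹ P̂_{i−1}(x) (∫₀ˣ P̂_{j−1}(t) dt) dx = (X_s)_{ij}`. -/
theorem integral_legendre_mul_integral_eq_Xmat (P : ℕ → Polynomial ℝ)
    (hP : IsShiftedLegendre P) (s : ℕ) (hs : 1 ≤ s) (i j : Fin s) :
    (∫ x in (0:ℝ)..1, (P (i : ℕ)).eval x * ∫ t in (0:ℝ)..x, (P (j : ℕ)).eval t) =
      Xmat s i j := by
  have hrw : (∫ x in (0:ℝ)..1, (P (i : ℕ)).eval x * ∫ t in (0:ℝ)..x, (P (j : ℕ)).eval t)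
      = ∫ x in (0:ℝ)..1, (P (i : ℕ)).eval x * (pint (P (j : ℕ))).eval x := by
    apply intervalIntegral.integral_congr
    intro x _
    simp only [integral_eq_pint]
  rw [hrw]
  set i' := (i : ℕ)
  set j' := (j : ℕ)
  show _ = Xmat s i j
  rw [Xmat]
  simp only [Matrix.of_apply]
  by_cases h00 : i' = 0 ∧ j' = 0
  · rw [if_pos h00]
    obtain ⟨hi0, hj0⟩ := h00
    have h := parts_key hP i' j'
    rw [hi0, hj0, if_pos rfl] at h
    rw [hi0, hj0]
    linarith
  · rw [if_neg h00]
    by_cases hij : i' = j' + 1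
    · rw [if_pos hij, hij]
      rw [← ratio_eq_xi hP j']
      exact S_sub hP j'
    · rw [if_neg hij]
      by_cases hji : j' = i' + 1
      · rw [if_pos hji]
        have h := parts_key hP i' j'
        rw [if_neg (show ¬ j' = 0 by omega), mul_zero] at h
        have h2 : (∫ x in (0:ℝ)..1, (P j').eval x * (pint (P i')).eval x) = xi (i' + 1) := by
          rw [hji, ← ratio_eq_xi hP i']
          exact S_sub hP i'
        linarith
      · rw [if_neg hji]
        rcases lt_trichotomy i' j' with h | h | h
        · -- j' > i' + 1
          have h := parts_key hP i' j'
          rw [if_neg (show ¬ j' = 0 by omega), mul_zero] at h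
          have h2 := S_high hP j' i' (by omega)
          linarith
        · -- i' = j', not both zero
          rw [h]
          have hj0 : j' ≠ 0 := fun h0 => h00 ⟨by omega, h0⟩
          exact S_diag hP j' hj0
        · -- i' > j' + 1
          exact S_high hP i' j' (by omega)

end
end

section
/- For every s with 1 ≤ s ≤ k, 𝒫_s^T Ω ℐ_s = X_s; entrywise, for all 1 ≤ i, j ≤ s, ∑_{ℓ=1}^k b_ℓ P̂_{i−1}(c_ℓ) ∫₀^{c_ℓ} P̂_{j−1}(t) dt = (X_s)_{ij}. -/
open scoped Matrix

noncomputable section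

/-- The matrix `𝒫_r ∈ ℝ^{k×r}`, `(𝒫_r)_{ij} = P̂_{j−1}(c_i)` (0-based). -/
def Pmat {k : ℕ} (P : ℕ → Polynomial ℝ) (c : Fin k → ℝ) (r : ℕ) :
    Matrix (Fin k) (Fin r) ℝ :=
  Matrix.of fun i j => (P (j : ℕ)).eval (c i)

/-- The matrix `ℐ_s ∈ ℝ^{k×s}`, `(ℐ_s)_{ij} = ∫₀^{c_i} P̂_{j−1}(x) dx` (0-based). -/
def Imat {k : ℕ} (P : ℕ → Polynomial ℝ) (c : Fin k → ℝ) (s : ℕ) :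
    Matrix (Fin k) (Fin s) ℝ :=
  Matrix.of fun i j => ∫ x in (0:ℝ)..(c i), (P (j : ℕ)).eval x

open Polynomial intervalIntegral MeasureTheory
set_option linter.unusedSectionVars false
set_option maxHeartbeats 1000000

def ip (f g : ℝ[X]) : ℝ := ∫ x in (0:ℝ)..1, f.eval x * g.eval x

lemma ip_comm (f g : ℝ[X]) : ip f g = ip g f := by
  simp [ip, mul_comm]

lemma ip_sub (f g h : ℝ[X]) : ip (f - g) h = ip f h - ip g h := by
  simp only [ip, eval_sub, sub_mul]
  exact integral_sub (((f.continuous).mul (h.continuous)).intervalIntegrable _ _)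
    (((g.continuous).mul (h.continuous)).intervalIntegrable _ _)

lemma ip_self_pos (g : ℝ[X]) (hg : g ≠ 0) : 0 < ip g g := by
  rw [ip, integral_pos_iff_support_of_nonneg_ae
    (Filter.Eventually.of_forall fun x => mul_self_nonneg _)
    (((g.continuous).mul (g.continuous)).intervalIntegrable _ _)]
  refine ⟨one_pos, ?_⟩
  have hroots : Set.Finite {x : ℝ | g.IsRoot x} := g.finite_setOf_isRoot hg
  have hsub : Set.Ioc (0:ℝ) 1 \ {x : ℝ | g.IsRoot x} ⊆
      Function.support (fun x => g.eval x * g.eval x) ∩ Set.Ioc 0 1 := by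
    rintro x ⟨hx1, hx2⟩
    exact ⟨by simp [Function.mem_support, IsRoot] at hx2 ⊢; exact fun h => hx2 h, hx1⟩
  calc (0:ENNReal) < volume (Set.Ioc (0:ℝ) 1 \ {x : ℝ | g.IsRoot x}) := by
        rw [measure_diff_null (hroots.measure_zero _)]
        simp
      _ ≤ _ := measure_mono hsub

lemma ip_self_eq_zero {g : ℝ[X]} (h : ip g g = 0) : g = 0 := by
  by_contra hg
  exact absurd h (ne_of_gt (ip_self_pos g hg))

lemma polyIntegrable (p : ℝ[X]) (a b : ℝ) :
    IntervalIntegrable (fun x => p.eval x) MeasureTheory.volume a b :=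
  (p.continuous).intervalIntegrable a b

lemma poly_ftc (q : ℝ[X]) (a b : ℝ) : ∫ x in a..b, q.derivative.eval x = q.eval b - q.eval a :=
  integral_eq_sub_of_hasDerivAt (fun x _ => q.hasDerivAt x) (polyIntegrable _ a b)

section SL
variable {P : ℕ → Polynomial ℝ} (hP : IsShiftedLegendre P)

include hP

lemma SL.ip_self (n : ℕ) : ip (P n) (P n) = 1 := by
  rw [ip, hP.2.2 n n, if_pos rfl]

lemma SL.ip_ne {m n : ℕ} (h : m ≠ n) : ip (P m) (P n) = 0 := by
  rw [ip, hP.2.2 m n, if_neg h]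

lemma SL.ne_zero (n : ℕ) : P n ≠ 0 := by
  intro h
  have := hP.1 n
  rw [h, degree_zero] at this
  exact absurd this (by simp)

lemma SL.natDegree (n : ℕ) : (P n).natDegree = n :=
  natDegree_eq_of_degree_eq_some (hP.1 n)

lemma SL.lc_ne (n : ℕ) : (P n).leadingCoeff ≠ 0 := ne_of_gt (hP.2.1 n)

lemma SL.ip_add (f g h : ℝ[X]) : ip (f + g) h = ip f h + ip g h := by
  simp only [ip, eval_add, add_mul]
  exact integral_add ((((f.continuous).mul (h.continuous)).intervalIntegrable _ _))
    ((((g.continuous).mul (h.continuous)).intervalIntegrable _ _))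

lemma SL.ip_smul (a : ℝ) (f h : ℝ[X]) : ip (C a * f) h = a * ip f h := by
  simp only [ip, eval_mul, eval_C, mul_assoc]
  exact integral_const_mul a _

lemma SL.orth_of_degree_lt (n : ℕ) (f : ℝ[X]) (hf : f.degree < n) : ip f (P n) = 0 := by
  suffices h : ∀ (N : ℕ) (f : ℝ[X]), f.natDegree < N → f.degree < n → ip f (P n) = 0 by
    exact h (f.natDegree + 1) f (Nat.lt_succ_self _) hf
  intro N
  induction N with
  | zero => exact fun f h _ => absurd h (Nat.not_lt_zero _)
  | succ N ih =>
    intro f hfN hfn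
    by_cases hf0 : f = 0
    · simp [hf0, ip]
    have hdf : f.degree = (f.natDegree : ℕ) := degree_eq_natDegree hf0
    set m := f.natDegree with hm
    have hmn : m < n := by
      rwa [hdf, Nat.cast_lt] at hfn
    set a : ℝ := f.leadingCoeff / (P m).leadingCoeff with ha
    have ha0 : a ≠ 0 := div_ne_zero (leadingCoeff_ne_zero.mpr hf0) (SL.lc_ne hP m)
    set g : ℝ[X] := f - C a * P m with hg
    have hdm : (C a * P m).degree = f.degree := by
      rw [degree_mul, degree_C ha0, hP.1 m, hdf, zero_add]
    have hlcm : (C a * P m).leadingCoeff = f.leadingCoeff := by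
      rw [leadingCoeff_mul, leadingCoeff_C, ha, div_mul_cancel₀ _ (SL.lc_ne hP m)]
    have hdg : g.degree < f.degree := degree_sub_lt hdm.symm hf0 hlcm.symm
    have hfeq : f = g + C a * P m := by ring
    rw [hfeq, SL.ip_add hP, SL.ip_smul hP, SL.ip_ne hP (Nat.ne_of_lt hmn), mul_zero,
      add_zero]
    by_cases hg0 : g = 0
    · simp [hg0, ip]
    · exact ih g (lt_of_lt_of_le (natDegree_lt_natDegree hg0 hdg) (Nat.lt_succ_iff.mp hfN))
        (lt_trans hdg hfn)

lemma SL.ip_eq_coeff_div (n : ℕ) (f : ℝ[X]) (hf : f.degree ≤ n) :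
    ip f (P n) = f.coeff n / (P n).leadingCoeff := by
  set a : ℝ := f.coeff n / (P n).leadingCoeff with ha
  set g : ℝ[X] := f - C a * P n with hg
  have hcg : g.coeff n = 0 := by
    have : (P n).coeff n = (P n).leadingCoeff := by
      rw [leadingCoeff, SL.natDegree hP]
    simp [hg, this, ha, div_mul_cancel₀ _ (SL.lc_ne hP n)]
  have hdg : g.degree < n := by
    have hle : g.degree ≤ n :=
      le_trans (degree_sub_le _ _) (max_le hf (le_trans (degree_mul_le _ _)
        (by rw [hP.1 n]; exact le_trans (add_le_add_left degree_C_le _) (by simp))))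
    rcases lt_or_eq_of_le hle with h | h
    · exact h
    · exfalso
      have hg0 : g ≠ 0 := by intro h0; rw [h0] at h; simp at h
      have : g.leadingCoeff = 0 := by
        rwa [leadingCoeff, natDegree_eq_of_degree_eq_some h]
      exact hg0 (leadingCoeff_eq_zero.mp this)
  have hfeq : f = g + C a * P n := by ring
  rw [hfeq, SL.ip_add hP, SL.ip_smul hP, SL.ip_self hP n, mul_one,
    SL.orth_of_degree_lt hP n g hdg, zero_add]



lemma SL.P_zero : P 0 = 1 := by
  have h0 : P 0 = C ((P 0).coeff 0) := eq_C_of_degree_le_zero (le_of_eq (hP.1 0))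
  have hlc : (P 0).leadingCoeff = (P 0).coeff 0 := by rw [leadingCoeff, SL.natDegree hP]
  have h1 : ip (P 0) (P 0) = 1 := SL.ip_self hP 0
  rw [ip] at h1
  have heval : ∀ x : ℝ, (P 0).eval x = (P 0).coeff 0 := by
    intro x; rw [h0]; simp
  simp only [heval] at h1
  rw [intervalIntegral.integral_const, smul_eq_mul, sub_zero, one_mul] at h1
  have hpos : 0 < (P 0).coeff 0 := hlc ▸ hP.2.1 0
  have : (P 0).coeff 0 = 1 := by nlinarith
  rw [h0, this, map_one]


omit hP in
lemma poly_int_add (p q : ℝ[X]) (a b : ℝ) :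
    ∫ x in a..b, (p + q).eval x = (∫ x in a..b, p.eval x) + ∫ x in a..b, q.eval x := by
  simp only [eval_add]
  exact intervalIntegral.integral_add (polyIntegrable p a b) (polyIntegrable q a b)

omit hP in
lemma int_mul_eq_ip (f g : ℝ[X]) : ∫ x in (0:ℝ)..1, (f * g).eval x = ip f g := by
  simp [ip, eval_mul]

lemma SL.ip_X_mul_deriv (n : ℕ) : ip (X * derivative (P n)) (P n) = n := by
  rcases n with _ | m
  · have h0 : (X : ℝ[X]) * derivative (P 0) = 0 := by rw [SL.P_zero hP]; simp
    simp [h0, ip]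
  · have hc1 : (P (m + 1)).coeff (m + 1) = (P (m + 1)).leadingCoeff := by
      rw [leadingCoeff, SL.natDegree hP]
    have hcoeff : ((X : ℝ[X]) * derivative (P (m + 1))).coeff (m + 1) =
        (m + 1 : ℝ) * (P (m + 1)).leadingCoeff := by
      rw [coeff_X_mul, coeff_derivative, hc1]; push_cast; ring
    have h1 : (derivative (P (m + 1))).degree ≤ (m : ℕ) := by
      refine le_trans (degree_le_natDegree) ?_
      have := natDegree_derivative_le (P (m + 1))
      rw [SL.natDegree hP] at this
      exact_mod_cast this
    have hdeg : ((X : ℝ[X]) * derivative (P (m + 1))).degree ≤ ((m + 1 : ℕ) : WithBot ℕ) := by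
      calc ((X : ℝ[X]) * derivative (P (m + 1))).degree
          ≤ (X : ℝ[X]).degree + (derivative (P (m + 1))).degree := degree_mul_le _ _
        _ ≤ 1 + (m : ℕ) := add_le_add (le_of_eq degree_X) h1
        _ = ((m + 1 : ℕ) : WithBot ℕ) := by
            rw [← Nat.cast_one, ← Nat.cast_add, Nat.add_comm]
    rw [SL.ip_eq_coeff_div hP _ _ hdeg, hcoeff,
      mul_div_cancel_right₀ _ (SL.lc_ne hP (m + 1))]
    push_cast; ring

/-- the endpoint values -/
lemma SL.eval_one_sq (n : ℕ) : ((P n).eval 1) ^ 2 = 2 * n + 1 := by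
  have hder : derivative ((X : ℝ[X]) * P n * P n) =
      (P n) * (P n) + ((X * derivative (P n)) * (P n) + (X * derivative (P n)) * (P n)) := by
    simp only [derivative_mul, derivative_X]
    ring
  have hftc := poly_ftc ((X : ℝ[X]) * P n * P n) 0 1
  rw [hder, poly_int_add, poly_int_add, int_mul_eq_ip, SL.ip_self hP,
    int_mul_eq_ip, SL.ip_X_mul_deriv hP] at hftc
  simp only [eval_mul, eval_X] at hftc
  nlinarith [hftc]


omit hP in
lemma oneSubX_natDegree : ((1 : ℝ[X]) - X).natDegree = 1 := by
  have : ((1 : ℝ[X]) - X) = -(X - C 1) := by rw [map_one]; ring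
  rw [this, natDegree_neg, natDegree_X_sub_C]

omit hP in
lemma oneSubX_lc : ((1 : ℝ[X]) - X).leadingCoeff = -1 := by
  have : ((1 : ℝ[X]) - X) = -(X - C 1) := by rw [map_one]; ring
  rw [this, leadingCoeff_neg, (monic_X_sub_C (1:ℝ)).leadingCoeff]

lemma SL.refl_lc (n : ℕ) :
    (C ((-1:ℝ)^n) * (P n).comp (1 - X)).leadingCoeff = (P n).leadingCoeff := by
  rw [leadingCoeff_mul, leadingCoeff_C,
    leadingCoeff_comp (by rw [oneSubX_natDegree]; norm_num), oneSubX_lc, SL.natDegree hP]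
  rcases Nat.even_or_odd n with h | h
  · rw [h.neg_one_pow]; ring
  · rw [h.neg_one_pow]; ring

lemma SL.refl_isSL : IsShiftedLegendre (fun n => C ((-1:ℝ)^n) * (P n).comp (1 - X)) := by
  have hne : ∀ n : ℕ, ((-1:ℝ)^n) ≠ 0 := fun n => pow_ne_zero _ (by norm_num)
  have hcompne : ∀ n : ℕ, (P n).comp (1 - X) ≠ 0 := by
    intro n h
    have := SL.refl_lc hP n
    rw [leadingCoeff_mul, h, leadingCoeff_zero, mul_zero] at this
    exact SL.lc_ne hP n this.symm
  refine ⟨fun n => ?_, fun n => by rw [SL.refl_lc hP n]; exact hP.2.1 n, fun i j => ?_⟩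
  · rw [degree_mul, degree_C (hne n), zero_add,
      degree_eq_natDegree (hcompne n), natDegree_comp, oneSubX_natDegree, SL.natDegree hP,
      mul_one]
  · have hev : ∀ (m : ℕ) (x : ℝ), (C ((-1:ℝ)^m) * (P m).comp (1 - X)).eval x
        = (-1:ℝ)^m * (P m).eval (1 - x) := by
      intro m x; simp [eval_comp]
    simp only [hev]
    have : (∫ x in (0:ℝ)..1, (-1:ℝ)^i * eval (1 - x) (P i) * ((-1:ℝ)^j * eval (1 - x) (P j)))
        = ∫ x in (0:ℝ)..1, ((-1:ℝ)^i * (-1:ℝ)^j) * (eval (1-x) (P i) * eval (1-x) (P j)) := by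
      congr 1; funext x; ring
    rw [this, intervalIntegral.integral_const_mul]
    have hsub := intervalIntegral.integral_comp_sub_left
      (fun y => eval y (P i) * eval y (P j)) 1 (a := 0) (b := 1)
    simp only [sub_zero, sub_self] at hsub
    rw [hsub, hP.2.2 i j]
    by_cases hij : i = j
    · subst hij; simp [← pow_add]
    · simp [hij]

lemma SL.unique {Q : ℕ → ℝ[X]} (hQ : IsShiftedLegendre Q) (n : ℕ)
    (hlc : (Q n).leadingCoeff = (P n).leadingCoeff) : Q n = P n := by
  have hdegQ : (Q n).degree ≤ (n : ℕ) := le_of_eq (hQ.1 n)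
  have hcoeffQ : (Q n).coeff n = (Q n).leadingCoeff := by
    rw [leadingCoeff, SL.natDegree hQ]
  have h1 : ip (Q n) (P n) = 1 := by
    rw [SL.ip_eq_coeff_div hP n _ hdegQ, hcoeffQ, hlc,
      div_self (SL.lc_ne hP n)]
  have h2 : ip (P n) (Q n) = 1 := by rw [ip_comm]; exact h1
  have hgg : ip (Q n - P n) (Q n - P n) = 0 := by
    rw [ip_sub, ip_comm (Q n) _, ip_sub, ip_comm (P n) (Q n - P n), ip_sub,
      SL.ip_self hQ, SL.ip_self hP, h1, h2]
    ring
  have := ip_self_eq_zero hgg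
  linear_combination (norm := ring_nf) this

lemma SL.eval_zero (n : ℕ) : (P n).eval 0 = (-1 : ℝ)^n * (P n).eval 1 := by
  have hRn : C ((-1:ℝ)^n) * (P n).comp (1 - X) = P n :=
    SL.unique hP (SL.refl_isSL hP) n (SL.refl_lc hP n)
  have := congrArg (fun p : ℝ[X] => p.eval 0) hRn
  simpa [eval_comp] using this.symm

lemma SL.cross (n : ℕ) :
    2 * ((P n).eval 1 * (P (n+1)).eval 1)
      = (n + 1 : ℝ) * (P (n+1)).leadingCoeff / (P n).leadingCoeff := by
  -- ip (derivative (P (n+1))) (P n) = (n+1) lc_{n+1} / lc_n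
  have hdd : (derivative (P (n+1))).degree ≤ (n : ℕ) := by
    refine le_trans degree_le_natDegree ?_
    have := natDegree_derivative_le (P (n+1))
    rw [SL.natDegree hP] at this
    exact_mod_cast this
  have hco : (derivative (P (n+1))).coeff n = (P (n+1)).leadingCoeff * (n + 1 : ℝ) := by
    rw [coeff_derivative]
    have : (P (n+1)).coeff (n+1) = (P (n+1)).leadingCoeff := by
      rw [leadingCoeff, SL.natDegree hP]
    rw [this]
  have h1 : ip (derivative (P (n+1))) (P n)
      = (n + 1 : ℝ) * (P (n+1)).leadingCoeff / (P n).leadingCoeff := by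
    rw [SL.ip_eq_coeff_div hP n _ hdd, hco]; ring
  -- FTC on P n * P (n+1)
  have hder : derivative (P n * P (n+1)) =
      (derivative (P n)) * (P (n+1)) + (derivative (P (n+1))) * (P n) := by
    rw [derivative_mul]; ring
  have hftc := poly_ftc (P n * P (n+1)) 0 1
  have horth : ip (derivative (P n)) (P (n+1)) = 0 := by
    refine SL.orth_of_degree_lt hP (n+1) _ ?_
    refine lt_of_le_of_lt (degree_le_natDegree) ?_
    have h2 := natDegree_derivative_le (P n)
    rw [SL.natDegree hP] at h2
    exact_mod_cast lt_of_le_of_lt h2 (by omega)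
  rw [hder, poly_int_add, int_mul_eq_ip, int_mul_eq_ip, horth, h1, zero_add] at hftc
  have hz0 := SL.eval_zero hP n
  have hz1 := SL.eval_zero hP (n+1)
  rw [eval_mul, eval_mul, hz0, hz1] at hftc
  have hodd : (-1:ℝ)^n * (-1:ℝ)^(n+1) = -1 := by
    rw [← pow_add]
    exact Odd.neg_one_pow ⟨n, by ring⟩
  rw [hftc]
  linear_combination (eval 1 (P n) * eval 1 (P (n + 1))) * hodd


lemma SL.lc_ratio (n : ℕ) :
    (P n).leadingCoeff / ((n + 1 : ℝ) * (P (n+1)).leadingCoeff) = xi (n+1) := by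
  set K : ℝ := (n + 1 : ℝ) * (P (n+1)).leadingCoeff / (P n).leadingCoeff with hK
  have hKpos : 0 < K := by
    apply div_pos (mul_pos (by positivity) (hP.2.1 (n+1))) (hP.2.1 n)
  have hEE : (P n).eval 1 * (P (n+1)).eval 1 = K / 2 := by
    have := SL.cross hP n
    linarith
  have hsq : (K / 2) ^ 2 = (2 * n + 1) * (2 * (n + 1) + 1) := by
    rw [← hEE, mul_pow, SL.eval_one_sq hP n, SL.eval_one_sq hP (n+1)]
    push_cast; ring
  have harg : (4 * ((n + 1 : ℕ) : ℝ) ^ 2 - 1) = (K / 2) ^ 2 := by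
    rw [hsq]; push_cast; ring
  have hsqrt : Real.sqrt (4 * ((n + 1 : ℕ) : ℝ) ^ 2 - 1) = K / 2 := by
    rw [harg, Real.sqrt_sq (by positivity)]
  rw [xi, hsqrt]
  have h2 : 2 * (K / 2) = K := by ring
  rw [h2, hK, one_div_div]

end SL

def antid (p : ℝ[X]) : ℝ[X] := p.sum fun n a => C (a / (n + 1)) * X ^ (n + 1)

lemma antid_derivative (p : ℝ[X]) : derivative (antid p) = p := by
  rw [antid, Polynomial.sum_def, map_sum]
  have h : ∀ n ∈ p.support, derivative (C (p.coeff n / (n + 1)) * X ^ (n + 1))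
      = C (p.coeff n) * X ^ n := by
    intro n _
    rw [derivative_C_mul, derivative_X_pow, Nat.add_sub_cancel, ← mul_assoc, ← C_mul]
    congr 1
    push_cast
    field_simp
  rw [Finset.sum_congr rfl h]
  simp_rw [C_mul_X_pow_eq_monomial]
  exact (p.as_sum_support).symm

lemma antid_eval_zero (p : ℝ[X]) : (antid p).eval 0 = 0 := by
  rw [antid, Polynomial.sum_def, eval_finset_sum]
  refine Finset.sum_eq_zero fun n _ => ?_
  simp

lemma antid_degree (p : ℝ[X]) : (antid p).degree ≤ ((p.natDegree + 1 : ℕ) : WithBot ℕ) := by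
  rw [antid, Polynomial.sum_def]
  refine le_trans (degree_sum_le _ _) ?_
  rw [Finset.sup_le_iff]
  intro n hn
  refine le_trans (degree_C_mul_X_pow_le _ _) ?_
  exact_mod_cast Nat.add_le_add_right (le_natDegree_of_mem_supp n hn) 1

lemma antid_coeff_succ (p : ℝ[X]) (n : ℕ) :
    (antid p).coeff (n + 1) = p.coeff n / (n + 1) := by
  rw [antid, Polynomial.sum_def, finset_sum_coeff]
  have h : ∀ m ∈ p.support, (C (p.coeff m / (m + 1)) * X ^ (m + 1)).coeff (n + 1)
      = if m = n then p.coeff n / (n + 1) else 0 := by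
    intro m _
    rw [coeff_C_mul, coeff_X_pow]
    by_cases hmn : m = n
    · subst hmn; simp
    · rw [if_neg (by omega), if_neg hmn, mul_zero]
  rw [Finset.sum_congr rfl h, Finset.sum_ite_eq' p.support n (fun _ => p.coeff n / (n + 1))]
  by_cases hmem : n ∈ p.support
  · rw [if_pos hmem]
  · rw [if_neg hmem]
    rw [Polynomial.notMem_support_iff.mp hmem]
    simp

lemma antid_integral (p : ℝ[X]) (t : ℝ) :
    ∫ x in (0:ℝ)..t, p.eval x = (antid p).eval t := by
  have := poly_ftc (antid p) 0 t
  rw [antid_derivative, antid_eval_zero, sub_zero] at this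
  exact this

section SL2
variable {P : ℕ → Polynomial ℝ} (hP : IsShiftedLegendre P)
include hP

lemma SL.antid_eval_one (j : ℕ) : (antid (P j)).eval 1 = if j = 0 then (1:ℝ) else 0 := by
  have h := antid_integral (P j) 1
  have h2 : (∫ x in (0:ℝ)..1, (P j).eval x) = ip 1 (P j) := by simp [ip]
  rw [h2] at h
  have hdeg : (1 : ℝ[X]).degree ≤ (j : ℕ) := by
    rw [degree_one, ← Nat.cast_zero]
    exact Nat.cast_le.mpr (Nat.zero_le j)
  rw [← h, SL.ip_eq_coeff_div hP j _ hdeg, coeff_one]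
  by_cases hj : j = 0
  · subst hj
    have hlc : (P 0).leadingCoeff = 1 := by rw [SL.P_zero hP]; exact leadingCoeff_one
    simp [hlc]
  · simp [hj, Ne.symm hj]

lemma SL.M_sym (i j : ℕ) : ip (antid (P j)) (P i) + ip (antid (P i)) (P j)
    = (if i = 0 then (1:ℝ) else 0) * (if j = 0 then (1:ℝ) else 0) := by
  have hder : derivative (antid (P i) * antid (P j)) =
      (P i) * antid (P j) + antid (P i) * (P j) := by
    rw [derivative_mul, antid_derivative, antid_derivative]
  have hftc := poly_ftc (antid (P i) * antid (P j)) 0 1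
  rw [hder, poly_int_add, int_mul_eq_ip, int_mul_eq_ip] at hftc
  rw [ip_comm (P i) _] at hftc
  rw [eval_mul, eval_mul, antid_eval_zero, antid_eval_zero,
    SL.antid_eval_one hP i, SL.antid_eval_one hP j] at hftc
  rw [hftc]
  ring

lemma SL.M_high {i j : ℕ} (h : j + 1 < i) : ip (antid (P j)) (P i) = 0 := by
  refine SL.orth_of_degree_lt hP i _ ?_
  refine lt_of_le_of_lt (antid_degree (P j)) ?_
  rw [SL.natDegree hP]
  exact_mod_cast h

lemma SL.M_succ (j : ℕ) : ip (antid (P j)) (P (j+1)) = xi (j+1) := by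
  have hdeg : (antid (P j)).degree ≤ ((j + 1 : ℕ) : WithBot ℕ) := by
    have := antid_degree (P j)
    rwa [SL.natDegree hP] at this
  rw [SL.ip_eq_coeff_div hP (j+1) _ hdeg, antid_coeff_succ]
  have hc : (P j).coeff j = (P j).leadingCoeff := by rw [leadingCoeff, SL.natDegree hP]
  rw [hc, div_div, ← SL.lc_ratio hP j]

lemma SL.M_succ' (j : ℕ) : ip (antid (P (j+1))) (P j) = -xi (j+1) := by
  have := SL.M_sym hP j (j+1)
  rw [SL.M_succ hP j, if_neg (Nat.succ_ne_zero j), mul_zero] at this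
  linarith

lemma SL.M_diag_zero {i : ℕ} (h : i ≠ 0) : ip (antid (P i)) (P i) = 0 := by
  have := SL.M_sym hP i i
  rw [if_neg h, zero_mul] at this
  linarith

lemma SL.M_zero_zero : ip (antid (P 0)) (P 0) = 1 / 2 := by
  have := SL.M_sym hP 0 0
  rw [if_pos rfl, one_mul] at this
  linarith

end SL2

section Gauss
variable {P : ℕ → Polynomial ℝ} (hP : IsShiftedLegendre P)
  {k : ℕ} (hk : 1 ≤ k) (c : Fin k → ℝ) (hcinj : Function.Injective c)
  (hroot : ∀ i, (P k).IsRoot (c i)) (b : Fin k → ℝ)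
  (hb : ∀ i, b i = ∫ x in (0:ℝ)..1, ∏ j ∈ Finset.univ.erase i, (x - c j) / (c i - c j))

/-- the nodal polynomial -/
def nodal' (c : Fin k → ℝ) : ℝ[X] := ∏ ℓ : Fin k, (X - C (c ℓ))

omit hP hk hroot in
lemma nodal'_monic : (nodal' c).Monic := monic_prod_of_monic _ _ fun ℓ _ => monic_X_sub_C _

omit hP hk hroot in
lemma nodal'_natDegree : (nodal' c).natDegree = k := by
  rw [nodal', natDegree_prod_of_monic _ _ fun ℓ _ => monic_X_sub_C _]
  simp [natDegree_X_sub_C]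

omit hP hk hroot in
lemma nodal'_eval (ℓ : Fin k) : (nodal' c).eval (c ℓ) = 0 := by
  rw [nodal', eval_prod]
  exact Finset.prod_eq_zero (Finset.mem_univ ℓ) (by simp)

include hP hcinj hroot in
lemma Pk_eq : P k = C ((P k).leadingCoeff) * nodal' c := by
  set q := nodal' c with hq
  set r := P k - C ((P k).leadingCoeff) * q with hr
  have hdegq : (C ((P k).leadingCoeff) * q).degree = (P k).degree := by
    rw [degree_mul, degree_C (SL.lc_ne hP k), zero_add, hP.1 k,
      degree_eq_natDegree (nodal'_monic c).ne_zero, nodal'_natDegree]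
  have hlcq : (C ((P k).leadingCoeff) * q).leadingCoeff = (P k).leadingCoeff := by
    rw [leadingCoeff_mul, leadingCoeff_C, (nodal'_monic c).leadingCoeff, mul_one]
  have hrdeg : r.degree < (k : ℕ) := by
    rcases eq_or_ne r 0 with h | h
    · rw [h, degree_zero]; exact WithBot.bot_lt_coe _
    · have := degree_sub_lt hdegq.symm (SL.ne_zero hP k) hlcq.symm
      rwa [← hr, hP.1 k] at this
  have hreval : ∀ ℓ : Fin k, r.eval (c ℓ) = 0 := by
    intro ℓ
    rw [hr]
    simp [hroot ℓ, nodal'_eval c ℓ, (hroot ℓ).eq_zero, hq]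
  have : r = 0 := by
    refine Polynomial.eq_zero_of_degree_lt_of_eval_index_eq_zero Finset.univ
      (hcinj.injOn) ?_ (fun i _ => hreval i)
    rwa [Finset.card_univ, Fintype.card_fin]
  exact (sub_eq_zero.mp (hr ▸ this))

omit hP hk hcinj hroot hb in
lemma poly_int_sum {ι : Type*} (s : Finset ι) (g : ι → ℝ[X]) (a β : ℝ) :
    ∫ x in a..β, (∑ i ∈ s, g i).eval x = ∑ i ∈ s, ∫ x in a..β, (g i).eval x := by
  simp only [eval_finset_sum]
  exact intervalIntegral.integral_finset_sum (fun i _ => polyIntegrable (g i) a β)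

include hP hcinj hroot hb in
lemma gauss_quad (f : ℝ[X]) (hf : f.natDegree < 2 * k) :
    ∑ ℓ : Fin k, b ℓ * f.eval (c ℓ) = ∫ x in (0:ℝ)..1, f.eval x := by
  classical
  set q := nodal' c with hqdef
  have hqm : q.Monic := nodal'_monic c
  set h := f /ₘ q with hh
  set r := f %ₘ q with hrr
  have hfeq : f = r + q * h := (modByMonic_add_div f q).symm
  have hrdeg : r.degree < (k : ℕ) := by
    have := degree_modByMonic_lt f hqm
    rwa [degree_eq_natDegree hqm.ne_zero, nodal'_natDegree] at this
  have hhdeg : h.degree < (k : ℕ) := by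
    rcases eq_or_ne h 0 with h0 | h0
    · rw [h0, degree_zero]; exact WithBot.bot_lt_coe _
    · rw [degree_eq_natDegree h0]
      have : h.natDegree < k := by
        rw [hh, natDegree_divByMonic f hqm, nodal'_natDegree]
        omega
      exact_mod_cast this
  have hip : ∫ x in (0:ℝ)..1, (q * h).eval x = 0 := by
    rw [int_mul_eq_ip]
    have hPk := Pk_eq hP c hcinj hroot
    set L := (P k).leadingCoeff with hL
    have hqP : C L⁻¹ * P k = q := by
      rw [hPk, ← mul_assoc, ← C_mul, inv_mul_cancel₀ (SL.lc_ne hP k), C_1, one_mul]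
    rw [← hqP, SL.ip_smul hP, ip_comm (P k) h, SL.orth_of_degree_lt hP k h hhdeg, mul_zero]
  have hint : ∫ x in (0:ℝ)..1, f.eval x = ∫ x in (0:ℝ)..1, r.eval x := by
    conv_lhs => rw [hfeq]
    rw [poly_int_add, hip, add_zero]
  have hnode : ∀ ℓ, f.eval (c ℓ) = r.eval (c ℓ) := by
    intro ℓ
    conv_lhs => rw [hfeq]
    rw [eval_add, eval_mul, nodal'_eval, zero_mul, add_zero]
  have hinterp := Lagrange.eq_interpolate (v := c) (s := Finset.univ)
    (f := r) (hcinj.injOn) (by rwa [Finset.card_univ, Fintype.card_fin])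
  have hbas : ∀ ℓ : Fin k, (∫ x in (0:ℝ)..1, (Lagrange.basis Finset.univ c ℓ).eval x)
      = b ℓ := by
    intro ℓ
    rw [hb ℓ]
    refine intervalIntegral.integral_congr fun x _ => ?_
    rw [Lagrange.basis, eval_prod]
    refine Finset.prod_congr rfl fun j _ => ?_
    rw [Lagrange.basisDivisor, eval_mul, eval_C, eval_sub, eval_X, eval_C,
      div_eq_mul_inv, mul_comm]
  have hr_int : ∫ x in (0:ℝ)..1, r.eval x = ∑ ℓ : Fin k, r.eval (c ℓ) * b ℓ := by
    conv_lhs => rw [hinterp]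
    rw [Lagrange.interpolate_apply, poly_int_sum]
    refine Finset.sum_congr rfl fun ℓ _ => ?_
    have : ∀ x : ℝ, (C (r.eval (c ℓ)) * Lagrange.basis Finset.univ c ℓ).eval x
        = r.eval (c ℓ) * (Lagrange.basis Finset.univ c ℓ).eval x := by
      intro x; rw [eval_mul, eval_C]
    rw [intervalIntegral.integral_congr fun x _ => this x,
      intervalIntegral.integral_const_mul, hbas ℓ]
  rw [hint, hr_int]
  refine Finset.sum_congr rfl fun ℓ _ => ?_
  rw [hnode ℓ, mul_comm]

end Gauss

/-- For every `s` with `1 ≤ s ≤ k`, `𝒫_sᵀ Ω ℐ_s = X_s`. -/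
theorem PmatT_Omega_Imat_eq_Xmat (P : ℕ → Polynomial ℝ) (hP : IsShiftedLegendre P)
    (k : ℕ) (hk : 1 ≤ k) (c : Fin k → ℝ) (hc : StrictMono c)
    (hmem : ∀ i, c i ∈ Set.Ioo (0 : ℝ) 1) (hroot : ∀ i, (P k).IsRoot (c i))
    (hall : ∀ x : ℝ, (P k).IsRoot x → ∃ i, c i = x)
    (b : Fin k → ℝ)
    (hb : ∀ i, b i = ∫ x in (0:ℝ)..1, ∏ j ∈ Finset.univ.erase i, (x - c j) / (c i - c j))
    (s : ℕ) (hs : 1 ≤ s) (hsk : s ≤ k) :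
    (Pmat P c s)ᵀ * Matrix.diagonal b * Imat P c s = Xmat s := by
  have hcinj : Function.Injective c := hc.injective
  ext i j
  have hdeg_bound : (P (i:ℕ) * antid (P (j:ℕ))).natDegree < 2 * k := by
    have h1 : (P (i:ℕ) * antid (P (j:ℕ))).natDegree
        ≤ (P (i:ℕ)).natDegree + (antid (P (j:ℕ))).natDegree := natDegree_mul_le
    have h2 : (antid (P (j:ℕ))).natDegree ≤ (P (j:ℕ)).natDegree + 1 :=
      natDegree_le_iff_degree_le.mpr (antid_degree _)
    rw [SL.natDegree hP] at h1 h2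
    have hi := i.isLt
    have hj := j.isLt
    omega
  have hentry : ∀ ℓ : Fin k, ((Pmat P c s)ᵀ * Matrix.diagonal b) i ℓ * Imat P c s ℓ j
      = b ℓ * ((P (i:ℕ) * antid (P (j:ℕ))).eval (c ℓ)) := by
    intro ℓ
    rw [Matrix.mul_diagonal, Matrix.transpose_apply, Pmat, Imat]
    simp only [Matrix.of_apply]
    rw [antid_integral, eval_mul]
    ring
  rw [Matrix.mul_apply, Finset.sum_congr rfl (fun ℓ _ => hentry ℓ),
    gauss_quad hP c hcinj hroot b hb _ hdeg_bound, int_mul_eq_ip, ip_comm]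
  rw [Xmat]
  simp only [Matrix.of_apply]
  by_cases h00 : (i:ℕ) = 0 ∧ (j:ℕ) = 0
  · rw [if_pos h00, h00.1, h00.2]
    exact SL.M_zero_zero hP
  · rw [if_neg h00]
    by_cases hij : (i:ℕ) = (j:ℕ) + 1
    · rw [if_pos hij, hij]
      exact SL.M_succ hP (j:ℕ)
    · rw [if_neg hij]
      by_cases hji : (j:ℕ) = (i:ℕ) + 1
      · rw [if_pos hji, hji]
        exact SL.M_succ' hP (i:ℕ)
      · rw [if_neg hji]
        rcases Nat.lt_trichotomy (i:ℕ) (j:ℕ) with hlt | heq | hgt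
        · have hj0 : (j:ℕ) ≠ 0 := by omega
          have h2 : ip (antid (P (i:ℕ))) (P (j:ℕ)) = 0 := SL.M_high hP (by omega)
          have hsym := SL.M_sym hP (i:ℕ) (j:ℕ)
          rw [h2, add_zero, if_neg hj0, mul_zero] at hsym
          exact hsym
        · have hi0 : (i:ℕ) ≠ 0 := fun h => h00 ⟨h, by omega⟩
          rw [← heq]
          exact SL.M_diag_zero hP hi0
        · exact SL.M_high hP (by omega)
end
end
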